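/- arXiv:q-bio/0605032 — 2 statements merged into one kernel-verified Lean document; each statement's English description precedes it below -/
import Mathlib

section
/- Let k be a finite field, let n, m be positive integers, and let (s_1, t_1), …, (s_m, t_m) be data with s_j ∈ k^n and t_j ∈ k. For a subset G ⊆ {1, …, n}, there exists a polynomial f ∈ k[x_1, …, x_n] involving only the variables x_i with i ∈ G and satisfying f(s_j) = t_j for all j = 1, …, m, if and only if for every pair of indices j, l with t_j ≠ t_l there exists some i ∈ G with (s_j)_i ≠ (s_l)_i. -/
/-! A polynomial supported on `G` only sees the coordinates in `G`, so data it fits must have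
`t` constant on each fibre of the restriction `s j ↦ (s j)|_G`. Conversely, over a finite field
every function `(G → k) → k` is a polynomial function, so any `t` that factors through the
restriction is interpolated by a polynomial in the variables of `G`. -/

namespace MvPolynomial

theorem eval_eq_of_eqOn_of_mem_supported {R σ : Type*} [CommSemiring R] {s : Set σ}
    {f : MvPolynomial σ R} (hf : f ∈ supported R s) {x y : σ → R} (hxy : Set.EqOn x y s) :
    eval x f = eval y f := by
  rw [supported_eq_range_rename, AlgHom.mem_range] at hf
  obtain ⟨p, rfl⟩ := hf
  have hxy' := Set.domRestrict_eq_domRestrict_iff.mpr hxy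
  rw [Set.domRestrict_eq, Set.domRestrict_eq] at hxy'
  rw [eval_rename, eval_rename, hxy']

variable {K σ : Type*} [Field K] [Fintype K]

theorem exists_eval_eq [Finite σ] (F : (σ → K) → K) :
    ∃ p : MvPolynomial σ K, ∀ x, eval x p = F x := by
  obtain ⟨p, -, hp⟩ := Submodule.mem_map.mp (map_restrict_dom_evalₗ K σ ▸ Submodule.mem_top)
  exact ⟨p, congrFun hp⟩

theorem exists_mem_supported_eval_eq (s : Set σ) [Finite s] (F : (s → K) → K) :
    ∃ f ∈ supported K s, ∀ x, eval x f = F (s.domRestrict x) := by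
  obtain ⟨p, hp⟩ := exists_eval_eq F
  refine ⟨rename (↑) p, ?_, fun x ↦ ?_⟩
  · rw [supported_eq_range_rename]
    exact ⟨p, rfl⟩
  · rw [eval_rename, hp]
    rfl

theorem exists_mem_supported_eval_eq_iff_factorsThrough {ι : Type*} (s : Set σ) [Finite s]
    (x : ι → σ → K) (t : ι → K) :
    (∃ f ∈ supported K s, ∀ j, eval (x j) f = t j) ↔
      Function.FactorsThrough t (fun j ↦ s.domRestrict (x j)) := by
  constructor
  · rintro ⟨f, hf, hfit⟩ j l hjl
    rw [← hfit j, ← hfit l]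
    exact eval_eq_of_eqOn_of_mem_supported hf (Set.domRestrict_eq_domRestrict_iff.mp hjl)
  · intro ht
    obtain ⟨f, hf, hfF⟩ := exists_mem_supported_eval_eq s (Function.extend _ t 0)
    exact ⟨f, hf, fun j ↦ (hfF _).trans (ht.extend_apply 0 j)⟩

end MvPolynomial

theorem Function.factorsThrough_domRestrict_iff {ι σ α β : Type*} (s : Set σ) (x : ι → σ → α)
    (t : ι → β) :
    Function.FactorsThrough t (fun j ↦ s.domRestrict (x j)) ↔
      ∀ j l, t j ≠ t l → ∃ i ∈ s, x j i ≠ x l i := by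
  refine forall₂_congr fun j l ↦ ?_
  rw [← not_imp_not, Set.domRestrict_eq_domRestrict_iff, Set.EqOn]
  push Not
  rfl

theorem minimal_sets_criterion_general
    (k : Type*) [Field k] [Fintype k] (n m : ℕ)
    (s : Fin m → Fin n → k) (t : Fin m → k) (G : Set (Fin n)) :
    (∃ f ∈ MvPolynomial.supported k G, ∀ j, MvPolynomial.eval (s j) f = t j) ↔
      (∀ j l, t j ≠ t l → ∃ i ∈ G, s j i ≠ s l i) := by
  rw [MvPolynomial.exists_mem_supported_eval_eq_iff_factorsThrough,
    Function.factorsThrough_domRestrict_iff]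

/-- Over a finite field `k`, given data `(s j, t j)` with `s j ∈ k^n`,
`t j ∈ k`, and a subset `G ⊆ {1, …, n}`, there is a polynomial supported on the
variables in `G` fitting the data iff any two data points with different output
values differ in some coordinate in `G`. -/
theorem minimal_sets_criterion
    (k : Type*) [Field k] [Fintype k] (n m : ℕ) (hn : 0 < n) (hm : 0 < m)
    (s : Fin m → Fin n → k) (t : Fin m → k) (G : Set (Fin n)) :
    (∃ f ∈ MvPolynomial.supported k G, ∀ j, MvPolynomial.eval (s j) f = t j) ↔
      (∀ j l, t j ≠ t l → ∃ i ∈ G, s j i ≠ s l i) :=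
  minimal_sets_criterion_general k n m s t G
end

section
/- Let k be a finite field, let (s_1, t_1), …, (s_m, t_m) be data with s_j ∈ k^n and t_j ∈ k, and let M_X ⊆ k[x_1, …, x_n] be the square-free monomial ideal generated by all monomials m(s_j, s_l) = ∏_{i : (s_j)_i ≠ (s_l)_i} x_i over pairs j, l with t_j ≠ t_l. Then for a subset G ⊆ {1, …, n}, there exists a polynomial f ∈ k[x_i : i ∈ G] with f(s_j) = t_j for all j if and only if M_X is contained in the ideal ⟨x_i : i ∈ G⟩ generated by the variables indexed by G. (In the paper's notation, with F the complement of G: F ∈ Δ_X if and only if the ideal ⟨x_i : i ∉ F⟩ contains M_X.) -/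
open MvPolynomial
open scoped Classical

lemma prod_X_mem_span_iff {k : Type*} [Field k] {n : ℕ} (D : Finset (Fin n)) (G : Set (Fin n)) :
    (∏ i ∈ D, MvPolynomial.X i : MvPolynomial (Fin n) k) ∈ Ideal.span (MvPolynomial.X '' G) ↔
      ∃ i ∈ D, i ∈ G := by
  constructor
  · intro h
    by_contra hc
    push_neg at hc
    set x : Fin n → k := fun i => if i ∈ G then 0 else 1 with hx
    have hker : Ideal.span (MvPolynomial.X '' G) ≤ RingHom.ker (eval x) := by
      rw [Ideal.span_le]
      rintro p ⟨i, hi, rfl⟩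
      simp [RingHom.mem_ker, hx, hi]
    have := hker h
    rw [RingHom.mem_ker] at this
    simp only [map_prod, eval_X] at this
    rcases Finset.prod_eq_zero_iff.mp this with ⟨i, hi, hzero⟩
    by_cases hiG : i ∈ G
    · exact hc i hi hiG
    · simp [hx, hiG] at hzero
  · rintro ⟨i, hi, hiG⟩
    rw [← Finset.mul_prod_erase D _ hi]
    exact Ideal.mul_mem_right _ _ (Ideal.subset_span ⟨i, hiG, rfl⟩)

lemma eval_eq_of_agree {k : Type*} [CommSemiring k] {n : ℕ} {G : Set (Fin n)}
    {f : MvPolynomial (Fin n) k} (hf : f ∈ MvPolynomial.supported k G)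
    {x y : Fin n → k} (h : ∀ i ∈ G, x i = y i) : eval x f = eval y f := by
  refine Algebra.adjoin_induction ?_ ?_ ?_ ?_ hf
  · rintro p ⟨i, hi, rfl⟩
    simpa using h i hi
  · intro r; simp
  · intro p q _ _ hp hq; simp [hp, hq]
  · intro p q _ _ hp hq; simp [hp, hq]

noncomputable def deltaG {k : Type*} [Field k] [Fintype k] {n : ℕ} (G : Set (Fin n))
    (v : Fin n → k) : MvPolynomial (Fin n) k :=
  ∏ i ∈ Finset.univ.filter (fun i => i ∈ G),
    (1 - (MvPolynomial.X i - MvPolynomial.C (v i)) ^ (Fintype.card k - 1))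

lemma deltaG_mem_supported {k : Type*} [Field k] [Fintype k] {n : ℕ} (G : Set (Fin n))
    (v : Fin n → k) : deltaG G v ∈ MvPolynomial.supported k G := by
  apply Subalgebra.prod_mem
  intro i hi
  simp only [Finset.mem_filter] at hi
  apply Subalgebra.sub_mem
  · exact Subalgebra.one_mem _
  · apply Subalgebra.pow_mem
    apply Subalgebra.sub_mem
    · exact Algebra.subset_adjoin ⟨i, hi.2, rfl⟩
    · exact Subalgebra.algebraMap_mem _ _

lemma eval_deltaG {k : Type*} [Field k] [Fintype k] {n : ℕ} (G : Set (Fin n))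
    (v x : Fin n → k) :
    eval x (deltaG G v) = if ∀ i ∈ G, x i = v i then 1 else 0 := by
  have hcard : Fintype.card k - 1 ≠ 0 := by
    have := Fintype.one_lt_card (α := k)
    omega
  rw [deltaG, map_prod]
  have hfac : ∀ i, eval x (1 - (MvPolynomial.X i - MvPolynomial.C (v i)) ^ (Fintype.card k - 1))
      = if x i = v i then 1 else 0 := by
    intro i
    by_cases h : x i = v i
    · simp [h, zero_pow hcard]
    · have : x i - v i ≠ 0 := sub_ne_zero_of_ne h
      simp [h, FiniteField.pow_card_sub_one_eq_one _ this]
  by_cases h : ∀ i ∈ G, x i = v i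
  · rw [if_pos h]
    apply Finset.prod_eq_one
    intro i hi
    simp only [Finset.mem_filter] at hi
    rw [hfac, if_pos (h i hi.2)]
  · rw [if_neg h]
    push_neg at h
    obtain ⟨i, hiG, hne⟩ := h
    apply Finset.prod_eq_zero (Finset.mem_filter.mpr ⟨Finset.mem_univ i, hiG⟩)
    rw [hfac, if_neg hne]

/-- The square-free monomial `m(p, q) = ∏_{i : p i ≠ q i} x i` recording the
coordinates in which the points `p, q ∈ k^n` differ. -/
noncomputable def pairMonomial {k : Type*} [Field k] [DecidableEq k] {n : ℕ}
    (p q : Fin n → k) : MvPolynomial (Fin n) k :=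
  ∏ i ∈ Finset.univ.filter (fun i => p i ≠ q i), MvPolynomial.X i

/-- Over a finite field `k`, given data `(s j, t j)`, let `M_X` be
the monomial ideal generated by all `m(s j, s l)` with `t j ≠ t l`. Then for a
subset `G ⊆ {1, …, n}`, there is a polynomial supported on the variables in `G`
fitting the data iff `M_X ⊆ ⟨x i : i ∈ G⟩`. -/
theorem exists_fit_iff_monomialIdeal_le
    (k : Type*) [Field k] [Fintype k] [DecidableEq k] (n m : ℕ)
    (s : Fin m → Fin n → k) (t : Fin m → k) (G : Set (Fin n)) :
    (∃ f ∈ MvPolynomial.supported k G, ∀ j, MvPolynomial.eval (s j) f = t j) ↔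
      Ideal.span {M : MvPolynomial (Fin n) k |
          ∃ j l, t j ≠ t l ∧ M = pairMonomial (s j) (s l)} ≤
        Ideal.span (MvPolynomial.X '' G) := by
  constructor
  · rintro ⟨f, hf, hft⟩
    rw [Ideal.span_le]
    rintro M ⟨j, l, hjl, rfl⟩
    rw [SetLike.mem_coe, pairMonomial, prod_X_mem_span_iff]
    by_contra hc
    push_neg at hc
    apply hjl
    rw [← hft j, ← hft l]
    apply eval_eq_of_agree hf
    intro i hi
    by_contra hne
    exact hc i (Finset.mem_filter.mpr ⟨Finset.mem_univ i, hne⟩) hi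
  · intro hle
    set ρ : Fin m → (Fin n → k) := fun j i => if i ∈ G then s j i else 0 with hρ
    have hinj : ∀ j l, ρ j = ρ l → t j = t l := by
      intro j l hjl
      by_contra hne
      have hmem : pairMonomial (s j) (s l) ∈
          Ideal.span {M : MvPolynomial (Fin n) k |
            ∃ j l, t j ≠ t l ∧ M = pairMonomial (s j) (s l)} :=
        Ideal.subset_span ⟨j, l, hne, rfl⟩
      rw [pairMonomial] at * 
      obtain ⟨i, hi, hiG⟩ := (prod_X_mem_span_iff _ _).mp (hle hmem)
      simp only [Finset.mem_filter] at hi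
      have := congrFun hjl i
      simp [hρ, hiG] at this
      exact hi.2 this
    set T : (Fin n → k) → k := fun v => if h : ∃ j, ρ j = v then t h.choose else 0 with hT
    have hTρ : ∀ j, T (ρ j) = t j := by
      intro j
      have h : ∃ l, ρ l = ρ j := ⟨j, rfl⟩
      rw [hT]
      simp only [dif_pos h]
      exact hinj _ _ h.choose_spec
    refine ⟨∑ v ∈ Finset.univ.image ρ, MvPolynomial.C (T v) * deltaG G v, ?_, ?_⟩
    · apply Subalgebra.sum_mem
      intro v _
      exact Subalgebra.mul_mem _ (Subalgebra.algebraMap_mem _ _) (deltaG_mem_supported G v)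
    · intro j
      have hkey : ∀ v ∈ Finset.univ.image ρ,
          eval (s j) (MvPolynomial.C (T v) * deltaG G v) = if v = ρ j then T v else 0 := by
        rintro v hv
        rw [map_mul, eval_C, eval_deltaG]
        obtain ⟨l, _, rfl⟩ := Finset.mem_image.mp hv
        by_cases h : ρ l = ρ j
        · rw [if_pos h, if_pos, mul_one]
          intro i hi
          have := congrFun h i
          simpa [hρ, hi] using this.symm
        · rw [if_neg h, if_neg, mul_zero]
          intro hall
          apply h
          funext i
          by_cases hiG : i ∈ G
          · simpa [hρ, hiG] using (hall i hiG).symm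
          · simp [hρ, hiG]
      rw [map_sum, Finset.sum_congr rfl hkey, Finset.sum_ite_eq' _ (ρ j) T,
        if_pos (Finset.mem_image_of_mem ρ (Finset.mem_univ j)), hTρ]
end
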